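/- arXiv:quant-ph/0207066 — 4 statements merged into one kernel-verified Lean document; each statement's English description precedes it below -/
import Mathlib

section
/- Let n be a non-negative integer and let s, s' > max{3n + 3/2, 5/2}. Then the free propagator admits the asymptotic expansion e^{-itH₀} = π^{-1} Σ_{j=0}^{n} (−1)^{j−1} Γ(j+1/2) (it)^{−j−1/2} G_{2j} + o(t^{−n−1/2}) as t → +∞ in the operator norm from L^{2,s}(ℝ) to L^{2,−s'}(ℝ); precisely: for every ε > 0 there exists T > 0 such that for all t > T and every ψ ∈ L^{2,s}(ℝ), ‖e^{-itH₀}ψ − π^{-1} Σ_{j=0}^{n} (−1)^{j−1} Γ(j+1/2) (it)^{−j−1/2} G_{2j}ψ‖_{−s'} ≤ ε · t^{−n−1/2} · ‖ψ‖_s, where (it)^{−j−1/2} is the principal complex power and Γ is the Gamma function. -/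
/-!
Put `u = (x - y)² / (4t)`. Expanding `exp (i u)` to order `n` inside
`(4πit)^{-1/2} ∫ exp (i u) ψ(y) dy` gives exactly the `n + 1` terms of the expansion, since
`Γ(j + 1/2) / (2j)! = √π / (4^j j!)`, and the Taylor remainder is at most
`u^{n+1} ≤ |x - y|^{2n+2} t^{-n-1}`. The difference is therefore pointwise at most
`t^{-n-3/2} ∫ |x - y|^{2n+2} |ψ(y)| dy`; by Cauchy–Schwarz and `|x - y|² ≤ 2 (1 + x²) (1 + y²)`
this is `≤ C (1 + x²)^{n+1} ‖ψ‖_s` when `s > 2n + 5/2`, which is square integrable against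
`(1 + x²)^{-s'}` when `s' > 2n + 5/2`. So the remainder is `O(t^{-n-3/2})`.
-/

open MeasureTheory Filter

/-- The weighted norm `‖ψ‖_s = (∫ (1+x²)^s |ψ(x)|² dx)^{1/2}`. -/
noncomputable def wnorm (s : ℝ) (ψ : ℝ → ℂ) : ℝ :=
  (∫ x : ℝ, (1 + x ^ 2) ^ s * ‖ψ x‖ ^ 2) ^ ((1 : ℝ) / 2)

/-- Membership in the weighted space `L^{2,s}(ℝ)`. -/
def MemL2s (s : ℝ) (ψ : ℝ → ℂ) : Prop :=
  Measurable ψ ∧ Integrable (fun x : ℝ => (1 + x ^ 2) ^ s * ‖ψ x‖ ^ 2)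

/-- The integral operator `(G_j ψ)(x) = -(1/(2·j!)) ∫ |x-y|^j ψ(y) dy`. -/
noncomputable def Gop (j : ℕ) (ψ : ℝ → ℂ) (x : ℝ) : ℂ :=
  -(1 / (2 * (Nat.factorial j : ℂ))) * ∫ y : ℝ, ((|x - y| : ℝ) : ℂ) ^ j * ψ y

/-- The free propagator at time `t > 0`:
`(e^{-itH₀}ψ)(x) = (4πit)^{-1/2} ∫ exp(i(x-y)²/(4t)) ψ(y) dy`
(principal complex power). -/
noncomputable def freeProp (t : ℝ) (ψ : ℝ → ℂ) (x : ℝ) : ℂ :=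
  (4 * (Real.pi : ℂ) * Complex.I * (t : ℂ)) ^ (-(1 / 2) : ℂ) *
    ∫ y : ℝ, Complex.exp (Complex.I * ((x : ℂ) - (y : ℂ)) ^ 2 / (4 * (t : ℂ))) * ψ y

open Complex Finset
open scoped Nat Real

noncomputable def expTaylorRem (N : ℕ) (u : ℝ) : ℂ :=
  exp (I * u) - ∑ k ∈ range N, (I * u) ^ k / k !

lemma hasDerivAt_I_mul_pow_div_factorial (k : ℕ) (v : ℝ) :
    HasDerivAt (fun u : ℝ => (I * u) ^ (k + 1) / ((k + 1)! : ℂ))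
      (I * ((I * v) ^ k / k !)) v := by
  have h : HasDerivAt (fun z : ℂ => (I * z) ^ (k + 1) / ((k + 1)! : ℂ))
      ((k + 1 : ℕ) * (I * v) ^ k * I / ((k + 1)! : ℂ)) v := by
    simpa using (((hasDerivAt_id (v : ℂ)).const_mul I).pow (k + 1)).div_const
      ((k + 1)! : ℂ)
  convert h.comp_ofReal using 1
  push_cast [Nat.factorial_succ]
  field_simp

lemma hasDerivAt_expTaylorRem (N : ℕ) (v : ℝ) :
    HasDerivAt (expTaylorRem (N + 1)) (I * expTaylorRem N v) v := by
  have hexp : HasDerivAt (fun u : ℝ => exp (I * u)) (I * exp (I * v)) v := by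
    simpa [mul_comm] using ((hasDerivAt_id (v : ℂ)).const_mul I).cexp.comp_ofReal
  have hsum := HasDerivAt.fun_sum (u := range N) fun k _ =>
    hasDerivAt_I_mul_pow_div_factorial k v
  have hrem : expTaylorRem (N + 1) = fun u : ℝ =>
      exp (I * u) - (∑ k ∈ range N, (I * u) ^ (k + 1) / ((k + 1)! : ℂ) + 1) := by
    funext u
    simp [expTaylorRem, sum_range_succ']
  rw [hrem, expTaylorRem, mul_sub, mul_sum]
  exact hexp.fun_sub (hsum.add_const 1)

lemma norm_expTaylorRem_le (N : ℕ) (u : ℝ) : ‖expTaylorRem N u‖ ≤ |u| ^ N := by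
  induction N generalizing u with
  | zero => simp [expTaylorRem, norm_exp_I_mul_ofReal]
  | succ N ih =>
    have hball : ∀ v ∈ Metric.closedBall (0 : ℝ) |u|, ‖I * expTaylorRem N v‖ ≤ |u| ^ N := by
      intro v hv
      rw [norm_mul, norm_I, one_mul]
      exact (ih v).trans (pow_le_pow_left₀ (abs_nonneg v) (by simpa using hv) N)
    have h := (convex_closedBall (0 : ℝ) |u|).norm_image_sub_le_of_norm_hasDerivWithin_le
      (fun v _ => (hasDerivAt_expTaylorRem N v).hasDerivWithinAt) hball
      (Metric.mem_closedBall_self (abs_nonneg u)) (by simp : u ∈ Metric.closedBall 0 |u|)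
    simpa [expTaylorRem, sum_range_succ', pow_succ] using h

lemma cpow_ofReal_mul {r : ℝ} (hr : 0 < r) {z : ℂ} (hz : z ≠ 0) (w : ℂ) :
    ((r : ℂ) * z) ^ w = (r : ℂ) ^ w * z ^ w := by
  have hr0 : (r : ℂ) ≠ 0 := ofReal_ne_zero.mpr hr.ne'
  rw [cpow_def_of_ne_zero (mul_ne_zero hr0 hz), cpow_def_of_ne_zero hr0, cpow_def_of_ne_zero hz,
    log_ofReal_mul hr hz, add_mul, exp_add, ofReal_log hr.le]

lemma factorial_two_mul_eq (j : ℕ) : (2 * j)! = 2 ^ j * j ! * (2 * j - 1)‼ := by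
  cases j with
  | zero => rfl
  | succ k =>
    rw [show 2 * (k + 1) = 2 * k + 1 + 1 by ring, Nat.factorial_eq_mul_doubleFactorial,
      show 2 * k + 1 + 1 = 2 * (k + 1) by ring, Nat.doubleFactorial_two_mul,
      show 2 * (k + 1) - 1 = 2 * k + 1 by omega]

lemma Gamma_nat_add_half_div_factorial (j : ℕ) :
    Real.Gamma (j + 1 / 2) / (2 * j)! = √π / (4 ^ j * j !) := by
  rw [Real.Gamma_nat_add_half, factorial_two_mul_eq, show (4 : ℝ) ^ j = 2 ^ j * 2 ^ j by
    rw [← mul_pow]; norm_num]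
  have : ((2 * j - 1)‼ : ℝ) ≠ 0 := by exact_mod_cast (Nat.doubleFactorial_pos _).ne'
  push_cast
  field_simp

lemma four_pi_I_mul_cpow {t : ℝ} (ht : 0 < t) :
    (4 * (π : ℂ) * I * t) ^ (-(1 / 2) : ℂ) = (I * t) ^ (-(1 / 2) : ℂ) / (2 * √π) := by
  have hIt : I * (t : ℂ) ≠ 0 := mul_ne_zero I_ne_zero (ofReal_ne_zero.mpr ht.ne')
  rw [show 4 * (π : ℂ) * I * t = ((4 * π : ℝ) : ℂ) * (I * t) by push_cast; ring,
    cpow_ofReal_mul (by positivity) hIt, show (-(1 / 2) : ℂ) = ((-(1 / 2) : ℝ) : ℂ) by norm_num,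
    ← ofReal_cpow (by positivity), Real.rpow_neg (by positivity), ← Real.sqrt_eq_rpow,
    Real.sqrt_mul (by norm_num), show √(4 : ℝ) = 2 by
      rw [show (4 : ℝ) = 2 ^ 2 by norm_num, Real.sqrt_sq (by norm_num)]]
  push_cast
  ring

lemma expansion_coeff_eq {t : ℝ} (ht : 0 < t) (j : ℕ) :
    (π : ℂ)⁻¹ * ((-1 : ℂ) ^ (j + 1) * (Real.Gamma (j + 1 / 2) : ℂ) * (I * t) ^ (-(j : ℂ) - 1 / 2))
        * -(1 / (2 * ((2 * j)! : ℂ)))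
      = (4 * (π : ℂ) * I * t) ^ (-(1 / 2) : ℂ) * ((I / (4 * t)) ^ j / j !) := by
  have ht0 : (t : ℂ) ≠ 0 := ofReal_ne_zero.mpr ht.ne'
  have hIt : I * (t : ℂ) ≠ 0 := mul_ne_zero I_ne_zero ht0
  have hGamma : (Real.Gamma (j + 1 / 2) : ℂ) = √π / (4 ^ j * j !) * (2 * j)! := by
    have h := Gamma_nat_add_half_div_factorial j
    rw [div_eq_iff (by positivity)] at h
    rw [h]
    push_cast
    ring
  have hsqrt : ((√π : ℝ) : ℂ) ^ 2 = π := by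
    rw [← ofReal_pow, Real.sq_sqrt Real.pi_pos.le]
  have hsqrt0 : ((√π : ℝ) : ℂ) ≠ 0 := ofReal_ne_zero.mpr (Real.sqrt_pos.mpr Real.pi_pos).ne'
  have hneg : (-1 : ℂ) ^ j = I ^ j * I ^ j := by rw [← mul_pow, I_mul_I]
  rw [four_pi_I_mul_cpow ht, show -(j : ℂ) - 1 / 2 = -(1 / 2) - j by ring, cpow_sub _ _ hIt,
    cpow_natCast, hGamma, pow_succ, hneg, ← hsqrt, div_pow, mul_pow, mul_pow]
  have : (j ! : ℂ) ≠ 0 := by exact_mod_cast j.factorial_ne_zero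
  have : ((2 * j)! : ℂ) ≠ 0 := by exact_mod_cast (2 * j).factorial_ne_zero
  field_simp

lemma norm_four_pi_I_mul_cpow_le {t : ℝ} (ht : 0 < t) :
    ‖(4 * (π : ℂ) * I * t) ^ (-(1 / 2) : ℂ)‖ ≤ t ^ (-(1 / 2) : ℝ) := by
  rw [show (-(1 / 2) : ℂ) = ((-(1 / 2) : ℝ) : ℂ) by norm_num, norm_cpow_real]
  refine Real.rpow_le_rpow_of_nonpos ht ?_ (by norm_num)
  simp only [norm_mul, norm_I, norm_real, Real.norm_eq_abs, abs_of_pos ht, abs_of_pos Real.pi_pos,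
    RCLike.norm_ofNat, mul_one]
  nlinarith [Real.pi_gt_three]

lemma rpow_neg_half_mul_inv_pow {t : ℝ} (ht : 0 < t) (n : ℕ) :
    t ^ (-(1 / 2) : ℝ) * (t ^ (n + 1))⁻¹ = t ^ (-(n : ℝ) - 3 / 2) := by
  rw [← Real.rpow_natCast, ← Real.rpow_neg ht.le, ← Real.rpow_add ht]
  push_cast
  ring_nf

noncomputable def freePropExpansion (n : ℕ) (t : ℝ) (ψ : ℝ → ℂ) (x : ℝ) : ℂ :=
  (π : ℂ)⁻¹ * ∑ j ∈ range (n + 1),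
    (-1 : ℂ) ^ (j + 1) * (Real.Gamma (j + 1 / 2) : ℂ) * (I * t) ^ (-(j : ℂ) - 1 / 2) *
      Gop (2 * j) ψ x

lemma Gop_two_mul (j : ℕ) (ψ : ℝ → ℂ) (x : ℝ) :
    Gop (2 * j) ψ x =
      -(1 / (2 * ((2 * j)! : ℂ))) * ∫ y : ℝ, ((x - y : ℝ) : ℂ) ^ (2 * j) * ψ y := by
  simp_rw [Gop, ← ofReal_pow, Even.pow_abs (even_two_mul j)]

lemma freePropExpansion_eq {t : ℝ} (ht : 0 < t) (n : ℕ) (ψ : ℝ → ℂ) (x : ℝ) :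
    freePropExpansion n t ψ x = (4 * (π : ℂ) * I * t) ^ (-(1 / 2) : ℂ) *
      ∑ j ∈ range (n + 1),
        (I / (4 * t)) ^ j / j ! * ∫ y : ℝ, ((x - y : ℝ) : ℂ) ^ (2 * j) * ψ y := by
  rw [freePropExpansion, mul_sum, mul_sum]
  refine sum_congr rfl fun j _ => ?_
  rw [Gop_two_mul]
  linear_combination (∫ y : ℝ, ((x - y : ℝ) : ℂ) ^ (2 * j) * ψ y) * expansion_coeff_eq ht j

lemma freeProp_eq (t : ℝ) (ψ : ℝ → ℂ) (x : ℝ) :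
    freeProp t ψ x = (4 * (π : ℂ) * I * t) ^ (-(1 / 2) : ℂ) *
      ∫ y : ℝ, exp (I * ((x - y) ^ 2 / (4 * t) : ℝ)) * ψ y := by
  simp_rw [freeProp, ofReal_div, ofReal_pow, ofReal_mul, ofReal_sub, mul_div_assoc]
  rfl

lemma integral_mul_le_sqrt_mul_sqrt {α : Type*} [MeasurableSpace α] {μ : Measure α}
    {f g : α → ℝ} (hf₀ : 0 ≤ᵐ[μ] f) (hg₀ : 0 ≤ᵐ[μ] g) (hf : MemLp f 2 μ) (hg : MemLp g 2 μ) :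
    ∫ a, f a * g a ∂μ ≤ √(∫ a, f a ^ 2 ∂μ) * √(∫ a, g a ^ 2 ∂μ) := by
  have h := integral_mul_le_Lp_mul_Lq_of_nonneg Real.HolderConjugate.two_two hf₀ hg₀
    (by simpa using hf) (by simpa using hg)
  simpa [Real.sqrt_eq_rpow] using h

lemma wnorm_eq_sqrt (s : ℝ) (ψ : ℝ → ℂ) :
    wnorm s ψ = √(∫ x : ℝ, (1 + x ^ 2) ^ s * ‖ψ x‖ ^ 2) := by
  rw [wnorm, Real.sqrt_eq_rpow]

lemma wnorm_nonneg (s : ℝ) (ψ : ℝ → ℂ) : 0 ≤ wnorm s ψ :=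
  (wnorm_eq_sqrt s ψ).symm ▸ Real.sqrt_nonneg _

lemma one_add_sq_rpow_half_sq (a y : ℝ) : ((1 + y ^ 2) ^ (a / 2)) ^ 2 = (1 + y ^ 2) ^ a := by
  rw [← Real.rpow_natCast, ← Real.rpow_mul (by positivity)]
  norm_num

lemma integrable_one_add_sq_rpow {a : ℝ} (ha : a < -(1 / 2)) :
    Integrable fun y : ℝ => (1 + y ^ 2) ^ a := by
  simpa using integrable_rpow_neg_one_add_norm_sq (E := ℝ) (μ := volume) (r := -2 * a)
    (by simp; linarith)

lemma sq_abs_sub_le (x y : ℝ) : |x - y| ^ 2 ≤ 2 * (1 + x ^ 2) * (1 + y ^ 2) := by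
  rw [sq_abs]
  nlinarith [sq_nonneg (x + y), sq_nonneg (x * y)]

lemma abs_sub_pow_mul_rpow_sq_le {k m : ℕ} (hkm : k ≤ m) (s x y : ℝ) :
    (|x - y| ^ k * (1 + y ^ 2) ^ (-s / 2)) ^ 2
      ≤ 2 ^ m * (1 + x ^ 2) ^ m * (1 + y ^ 2) ^ ((m : ℝ) - s) := by
  have hy : (0 : ℝ) < 1 + y ^ 2 := by positivity
  have hbase : 1 ≤ 2 * (1 + x ^ 2) * (1 + y ^ 2) := by nlinarith [sq_nonneg x, sq_nonneg y]
  calc (|x - y| ^ k * (1 + y ^ 2) ^ (-s / 2)) ^ 2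
      = (|x - y| ^ 2) ^ k * (1 + y ^ 2) ^ (-s) := by
        rw [mul_pow, ← pow_mul, mul_comm k, pow_mul, one_add_sq_rpow_half_sq]
    _ ≤ (2 * (1 + x ^ 2) * (1 + y ^ 2)) ^ m * (1 + y ^ 2) ^ (-s) := by
        gcongr
        exact (pow_le_pow_left₀ (sq_nonneg _) (sq_abs_sub_le x y) k).trans
          (pow_le_pow_right₀ hbase hkm)
    _ = 2 ^ m * (1 + x ^ 2) ^ m * (1 + y ^ 2) ^ ((m : ℝ) - s) := by
        rw [sub_eq_add_neg, Real.rpow_add hy, Real.rpow_natCast, mul_pow, mul_pow]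
        ring

lemma abs_sub_pow_mul_eq (s : ℝ) (k : ℕ) (x y r : ℝ) :
    |x - y| ^ k * r = (|x - y| ^ k * (1 + y ^ 2) ^ (-s / 2)) * ((1 + y ^ 2) ^ (s / 2) * r) := by
  rw [neg_div, Real.rpow_neg (by positivity)]
  field_simp

lemma memLp_abs_sub_pow_mul_rpow {k m : ℕ} (hkm : k ≤ m) {s : ℝ}
    (hms : (m : ℝ) - s < -(1 / 2)) (x : ℝ) :
    MemLp (fun y : ℝ => |x - y| ^ k * (1 + y ^ 2) ^ (-s / 2)) 2 := by
  have hmeas : AEStronglyMeasurable fun y : ℝ => |x - y| ^ k * (1 + y ^ 2) ^ (-s / 2) :=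
    Measurable.aestronglyMeasurable (by fun_prop)
  refine (memLp_two_iff_integrable_sq hmeas).mpr ?_
  refine ((integrable_one_add_sq_rpow hms).const_mul (2 ^ m * (1 + x ^ 2) ^ m)).mono'
    (hmeas.pow 2) (.of_forall fun y => ?_)
  rw [Real.norm_of_nonneg (sq_nonneg _)]
  exact abs_sub_pow_mul_rpow_sq_le hkm s x y

lemma wnorm_neg_le_of_norm_le {f : ℝ → ℂ} {s K : ℝ} {m : ℕ} (hK : 0 ≤ K)
    (hms : (m : ℝ) - s < -(1 / 2)) (h : ∀ x, ‖f x‖ ≤ K * √((1 + x ^ 2) ^ m)) :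
    wnorm (-s) f ≤ K * √(∫ x : ℝ, (1 + x ^ 2) ^ ((m : ℝ) - s)) := by
  have hpt (x : ℝ) : (1 + x ^ 2) ^ (-s) * ‖f x‖ ^ 2 ≤ K ^ 2 * (1 + x ^ 2) ^ ((m : ℝ) - s) := by
    have hx : (0 : ℝ) < 1 + x ^ 2 := by positivity
    have hsq : ‖f x‖ ^ 2 ≤ K ^ 2 * (1 + x ^ 2) ^ m := by
      simpa [mul_pow, Real.sq_sqrt (le_of_lt (pow_pos hx m))] using
        pow_le_pow_left₀ (norm_nonneg _) (h x) 2
    rw [sub_eq_neg_add, Real.rpow_add hx, Real.rpow_natCast]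
    calc (1 + x ^ 2) ^ (-s) * ‖f x‖ ^ 2 ≤ (1 + x ^ 2) ^ (-s) * (K ^ 2 * (1 + x ^ 2) ^ m) := by
          gcongr
      _ = _ := by ring
  rw [wnorm_eq_sqrt, ← Real.sqrt_sq hK, ← Real.sqrt_mul (sq_nonneg K), ← integral_const_mul]
  exact Real.sqrt_le_sqrt <| integral_mono_of_nonneg (.of_forall fun x => by positivity)
    ((integrable_one_add_sq_rpow hms).const_mul _) (.of_forall hpt)

namespace MemL2s

variable {s : ℝ} {ψ : ℝ → ℂ}

lemma memLp_rpow_mul_norm (hψ : MemL2s s ψ) :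
    MemLp (fun y : ℝ => (1 + y ^ 2) ^ (s / 2) * ‖ψ y‖) 2 := by
  have hmeas : Measurable fun y : ℝ => (1 + y ^ 2) ^ (s / 2) * ‖ψ y‖ :=
    (by fun_prop : Measurable fun y : ℝ => (1 + y ^ 2) ^ (s / 2)).mul hψ.1.norm
  refine (memLp_two_iff_integrable_sq hmeas.aestronglyMeasurable).mpr ?_
  simpa only [Pi.mul_apply, mul_pow, one_add_sq_rpow_half_sq] using hψ.2

lemma integrable_abs_sub_pow_mul_norm (hψ : MemL2s s ψ) {k m : ℕ} (hkm : k ≤ m)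
    (hms : (m : ℝ) - s < -(1 / 2)) (x : ℝ) :
    Integrable fun y : ℝ => |x - y| ^ k * ‖ψ y‖ := by
  rw [funext fun y => abs_sub_pow_mul_eq s k x y ‖ψ y‖]
  exact (memLp_abs_sub_pow_mul_rpow hkm hms x).integrable_mul hψ.memLp_rpow_mul_norm

lemma integral_abs_sub_pow_mul_norm_le (hψ : MemL2s s ψ) {m : ℕ} (hms : (m : ℝ) - s < -(1 / 2))
    (x : ℝ) :
    ∫ y : ℝ, |x - y| ^ m * ‖ψ y‖
      ≤ √(2 ^ m * ∫ y : ℝ, (1 + y ^ 2) ^ ((m : ℝ) - s)) * wnorm s ψ * √((1 + x ^ 2) ^ m) := by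
  have hbound : ∫ y : ℝ, (|x - y| ^ m * (1 + y ^ 2) ^ (-s / 2)) ^ 2
      ≤ (2 ^ m * ∫ y : ℝ, (1 + y ^ 2) ^ ((m : ℝ) - s)) * (1 + x ^ 2) ^ m := by
    rw [mul_right_comm, ← integral_const_mul]
    exact integral_mono_of_nonneg (.of_forall fun y => sq_nonneg _)
      ((integrable_one_add_sq_rpow hms).const_mul _)
      (.of_forall fun y => abs_sub_pow_mul_rpow_sq_le le_rfl s x y)
  rw [funext fun y => abs_sub_pow_mul_eq s m x y ‖ψ y‖]
  calc _ ≤ √(∫ y : ℝ, (|x - y| ^ m * (1 + y ^ 2) ^ (-s / 2)) ^ 2) * wnorm s ψ := by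
        rw [wnorm_eq_sqrt]
        simpa only [mul_pow, one_add_sq_rpow_half_sq] using
          integral_mul_le_sqrt_mul_sqrt (.of_forall fun y => by positivity)
            (.of_forall fun y => by positivity) (memLp_abs_sub_pow_mul_rpow le_rfl hms x)
            hψ.memLp_rpow_mul_norm
    _ ≤ _ := by
        rw [mul_right_comm, ← Real.sqrt_mul (by positivity)]
        gcongr
        exact wnorm_nonneg s ψ

lemma integrable_mul_of_norm_le (hψ : MemL2s s ψ) {k m : ℕ} (hkm : k ≤ m)
    (hms : (m : ℝ) - s < -(1 / 2)) {g : ℝ → ℂ} (hg : Measurable g) (x : ℝ)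
    (hgx : ∀ y, ‖g y‖ ≤ |x - y| ^ k) : Integrable fun y : ℝ => g y * ψ y :=
  (hψ.integrable_abs_sub_pow_mul_norm hkm hms x).mono' (hg.mul hψ.1).aestronglyMeasurable
    (.of_forall fun y => by rw [norm_mul]; gcongr; exact hgx y)

lemma freeProp_sub_freePropExpansion_eq (hψ : MemL2s s ψ) {n : ℕ}
    (hms : ((2 * n + 2 : ℕ) : ℝ) - s < -(1 / 2)) {t : ℝ} (ht : 0 < t) (x : ℝ) :
    freeProp t ψ x - freePropExpansion n t ψ x = (4 * (π : ℂ) * I * t) ^ (-(1 / 2) : ℂ) *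
      ∫ y : ℝ, expTaylorRem (n + 1) ((x - y) ^ 2 / (4 * t)) * ψ y := by
  have hexp : Integrable fun y : ℝ => exp (I * ((x - y) ^ 2 / (4 * t) : ℝ)) * ψ y :=
    hψ.integrable_mul_of_norm_le (k := 0) (Nat.zero_le _) hms (by fun_prop) x
      fun y => by rw [norm_exp_I_mul_ofReal, pow_zero]
  have hterms : ∀ j ∈ range (n + 1), Integrable fun y : ℝ =>
      (I / (4 * t)) ^ j / j ! * (((x - y : ℝ) : ℂ) ^ (2 * j) * ψ y) := fun j hj =>
    (hψ.integrable_mul_of_norm_le (k := 2 * j) (by have := mem_range.mp hj; omega) hms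
      (by fun_prop) x fun y => by rw [norm_pow, norm_real, Real.norm_eq_abs]).const_mul _
  have hrem : (fun y : ℝ => expTaylorRem (n + 1) ((x - y) ^ 2 / (4 * t)) * ψ y) = fun y =>
      exp (I * ((x - y) ^ 2 / (4 * t) : ℝ)) * ψ y -
        ∑ j ∈ range (n + 1), (I / (4 * t)) ^ j / j ! * (((x - y : ℝ) : ℂ) ^ (2 * j) * ψ y) := by
    funext y
    simp only [expTaylorRem, sub_mul, sum_mul]
    congr 1
    refine sum_congr rfl fun j _ => ?_
    rw [show I * ((x - y) ^ 2 / (4 * t) : ℝ) = I / (4 * t) * ((x - y : ℝ) : ℂ) ^ 2 by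
      push_cast; ring, mul_pow, pow_mul]
    ring
  rw [freeProp_eq, freePropExpansion_eq ht, hrem,
    integral_sub hexp (integrable_finsetSum _ hterms), integral_finsetSum _ hterms, mul_sub]
  simp_rw [integral_const_mul]

lemma norm_freeProp_sub_freePropExpansion_le (hψ : MemL2s s ψ) {n : ℕ}
    (hms : ((2 * n + 2 : ℕ) : ℝ) - s < -(1 / 2)) {t : ℝ} (ht : 0 < t) (x : ℝ) :
    ‖freeProp t ψ x - freePropExpansion n t ψ x‖
      ≤ t ^ (-(n : ℝ) - 3 / 2) * ∫ y : ℝ, |x - y| ^ (2 * n + 2) * ‖ψ y‖ := by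
  have hrem (y : ℝ) : ‖expTaylorRem (n + 1) ((x - y) ^ 2 / (4 * t)) * ψ y‖
      ≤ (t ^ (n + 1))⁻¹ * (|x - y| ^ (2 * n + 2) * ‖ψ y‖) := by
    rw [norm_mul, ← mul_assoc]
    gcongr
    calc ‖expTaylorRem (n + 1) ((x - y) ^ 2 / (4 * t))‖
        ≤ |(x - y) ^ 2 / (4 * t)| ^ (n + 1) := norm_expTaylorRem_le _ _
      _ ≤ ((x - y) ^ 2 / t) ^ (n + 1) := by
        rw [abs_of_nonneg (by positivity)]
        gcongr
        linarith
      _ = (t ^ (n + 1))⁻¹ * |x - y| ^ (2 * n + 2) := by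
        rw [div_pow, ← pow_mul, ← Even.pow_abs (even_two_mul _)]
        ring_nf
  rw [hψ.freeProp_sub_freePropExpansion_eq hms ht, norm_mul, ← rpow_neg_half_mul_inv_pow ht,
    mul_assoc (t ^ _), ← integral_const_mul]
  exact mul_le_mul (norm_four_pi_I_mul_cpow_le ht)
    (norm_integral_le_of_norm_le ((hψ.integrable_abs_sub_pow_mul_norm le_rfl hms x).const_mul _)
      (.of_forall hrem)) (norm_nonneg _) (by positivity)

lemma wnorm_freeProp_sub_freePropExpansion_le (hψ : MemL2s s ψ) {n : ℕ} {s' t : ℝ}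
    (hms : ((2 * n + 2 : ℕ) : ℝ) - s < -(1 / 2))
    (hms' : ((2 * n + 2 : ℕ) : ℝ) - s' < -(1 / 2)) (ht : 0 < t) :
    wnorm (-s') (fun x => freeProp t ψ x - freePropExpansion n t ψ x)
      ≤ t ^ (-(n : ℝ) - 3 / 2) *
          (√(2 ^ (2 * n + 2) * ∫ y : ℝ, (1 + y ^ 2) ^ (((2 * n + 2 : ℕ) : ℝ) - s)) *
            √(∫ x : ℝ, (1 + x ^ 2) ^ (((2 * n + 2 : ℕ) : ℝ) - s'))) * wnorm s ψ := by
  set D := ∫ y : ℝ, (1 + y ^ 2) ^ (((2 * n + 2 : ℕ) : ℝ) - s)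
  refine (wnorm_neg_le_of_norm_le (K := t ^ (-(n : ℝ) - 3 / 2) * √(2 ^ (2 * n + 2) * D) * wnorm s ψ)
    (mul_nonneg (by positivity) (wnorm_nonneg s ψ)) hms' fun x => ?_).trans_eq (by ring)
  refine (hψ.norm_freeProp_sub_freePropExpansion_le hms ht x).trans ?_
  exact (mul_le_mul_of_nonneg_left (hψ.integral_abs_sub_pow_mul_norm_le hms x)
    (by positivity)).trans_eq (by ring)

end MemL2s

lemma two_mul_add_two_sub_lt_of_max_lt {n : ℕ} {s : ℝ}
    (hs : s > max (3 * (n : ℝ) + 3 / 2) (5 / 2)) :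
    ((2 * n + 2 : ℕ) : ℝ) - s < -(1 / 2) := by
  rw [gt_iff_lt, max_lt_iff] at hs
  push_cast
  rcases Nat.eq_zero_or_pos n with rfl | hn
  · norm_num
    linarith
  · have : (1 : ℝ) ≤ n := by exact_mod_cast hn
    linarith

/-- Asymptotic expansion of the free propagator:
`e^{-itH₀} = π⁻¹ Σ_{j=0}^n (−1)^{j−1} Γ(j+1/2) (it)^{−j−1/2} G_{2j} + o(t^{−n−1/2})`
as `t → ∞`, in the operator norm from `L^{2,s}` to `L^{2,−s'}`,
for `s, s' > max{3n+3/2, 5/2}`.  (Note `(−1)^{j+1} = (−1)^{j−1}`.) -/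
theorem stmt0 (n : ℕ) (s s' : ℝ)
    (hs : s > max (3 * (n : ℝ) + 3 / 2) (5 / 2))
    (hs' : s' > max (3 * (n : ℝ) + 3 / 2) (5 / 2)) :
    ∀ ε > 0, ∃ T > 0, ∀ t : ℝ, t > T → ∀ ψ : ℝ → ℂ, MemL2s s ψ →
      wnorm (-s') (fun x : ℝ =>
          freeProp t ψ x -
            ((Real.pi : ℂ))⁻¹ * ∑ j ∈ Finset.range (n + 1),
              (-1 : ℂ) ^ (j + 1) * ((Real.Gamma ((j : ℝ) + 1 / 2) : ℝ) : ℂ) *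
                (Complex.I * (t : ℂ)) ^ (-(j : ℂ) - 1 / 2) * Gop (2 * j) ψ x)
        ≤ ε * t ^ (-(n : ℝ) - 1 / 2) * wnorm s ψ := by
  intro ε hε
  have hms := two_mul_add_two_sub_lt_of_max_lt hs
  have hms' := two_mul_add_two_sub_lt_of_max_lt hs'
  set C := √(2 ^ (2 * n + 2) * ∫ y : ℝ, (1 + y ^ 2) ^ (((2 * n + 2 : ℕ) : ℝ) - s))
    * √(∫ x : ℝ, (1 + x ^ 2) ^ (((2 * n + 2 : ℕ) : ℝ) - s'))
  refine ⟨C / ε + 1, by positivity, fun t ht ψ hψ => ?_⟩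
  have ht0 : 0 < t := (by positivity : 0 < C / ε + 1).trans ht
  have hCt : C ≤ ε * t := by
    rw [← div_le_iff₀' hε]
    linarith
  refine (hψ.wnorm_freeProp_sub_freePropExpansion_le hms hms' ht0).trans ?_
  gcongr ?_ * _
  · exact wnorm_nonneg s ψ
  calc t ^ (-(n : ℝ) - 3 / 2) * C = t ^ (-(n : ℝ) - 1 / 2) * t⁻¹ * C := by
        rw [← Real.rpow_neg_one, ← Real.rpow_add ht0]
        ring_nf
    _ ≤ t ^ (-(n : ℝ) - 1 / 2) * t⁻¹ * (ε * t) := by gcongr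
    _ = ε * t ^ (-(n : ℝ) - 1 / 2) := by field_simp
end

section
/- Let s, s' > 1/2 and let z be a nonzero complex number in the closed upper half-plane. Then for every ψ ∈ L^{2,s}(ℝ), the free resolvent satisfies ‖R₀(z)ψ‖_{−s'} ≤ (2|z|^{1/2})^{−1} · (∫_ℝ (1+x²)^{−s'} dx)^{1/2} · (∫_ℝ (1+y²)^{−s} dy)^{1/2} · ‖ψ‖_s; in particular R₀(z) is a bounded operator from L^{2,s}(ℝ) to L^{2,−s'}(ℝ). -/
open MeasureTheory Filter

/-- The free resolvent `(R₀(z)ψ)(x) = −(1/(2i z^{1/2})) ∫ exp(i z^{1/2}|x−y|) ψ(y) dy`,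
with the principal square root `z^{1/2}`. -/
noncomputable def R0 (z : ℂ) (ψ : ℝ → ℂ) (x : ℝ) : ℂ :=
  -(1 / (2 * Complex.I * z ^ ((1 : ℂ) / 2))) *
    ∫ y : ℝ, Complex.exp (Complex.I * z ^ ((1 : ℂ) / 2) * ((|x - y| : ℝ) : ℂ)) * ψ y

/-!
Since `Im z^{1/2} ≥ 0`, the kernel `exp (i z^{1/2} |x - y|)` has modulus at most one, so `R₀(z)ψ`
is bounded pointwise by `(2|z|^{1/2})⁻¹ ‖ψ‖_{L¹}`. Cauchy–Schwarz against the weight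
`(1 + y²)^s` bounds `‖ψ‖_{L¹}` by `(∫ (1 + y²)^{-s})^{1/2} ‖ψ‖_s`, and a function bounded by `C`
has `‖·‖_{-s'} ≤ C (∫ (1 + x²)^{-s'})^{1/2}`.
-/

lemma inv_sqrt_mul_sqrt_mul {a : ℝ} (ha : 0 < a) (b : ℝ) : (√a)⁻¹ * (√a * b) = b :=
  inv_mul_cancel_left₀ (Real.sqrt_pos.2 ha).ne' b

section WeightedCauchySchwarz

variable {α E : Type*} [MeasurableSpace α] {μ : Measure α} [NormedAddCommGroup E]
  {ρ : α → ℝ} {ψ : α → E}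

lemma memLp_two_inv_sqrt (hρ : ∀ x, 0 < ρ x) (hρm : Measurable ρ)
    (hρi : Integrable (fun x => (ρ x)⁻¹) μ) :
    MemLp (fun x => (√(ρ x))⁻¹) 2 μ := by
  refine (memLp_two_iff_integrable_sq hρm.sqrt.inv.aestronglyMeasurable).2 ?_
  simpa only [Pi.inv_apply, inv_pow, Real.sq_sqrt (hρ _).le] using hρi

lemma memLp_two_sqrt_mul_norm (hρ : ∀ x, 0 < ρ x) (hρm : Measurable ρ)
    (hψm : AEStronglyMeasurable ψ μ) (hψi : Integrable (fun x => ρ x * ‖ψ x‖ ^ 2) μ) :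
    MemLp (fun x => √(ρ x) * ‖ψ x‖) 2 μ := by
  refine (memLp_two_iff_integrable_sq
    (hρm.sqrt.aestronglyMeasurable.mul hψm.norm)).2 ?_
  simpa only [Pi.mul_apply, mul_pow, Real.sq_sqrt (hρ _).le] using hψi

lemma integrable_norm_of_integrable_weight (hρ : ∀ x, 0 < ρ x) (hρm : Measurable ρ)
    (hρi : Integrable (fun x => (ρ x)⁻¹) μ) (hψm : AEStronglyMeasurable ψ μ)
    (hψi : Integrable (fun x => ρ x * ‖ψ x‖ ^ 2) μ) :
    Integrable (fun x => ‖ψ x‖) μ := by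
  refine ((memLp_two_inv_sqrt hρ hρm hρi).integrable_mul
    (memLp_two_sqrt_mul_norm hρ hρm hψm hψi)).congr (Eventually.of_forall fun x => ?_)
  exact inv_sqrt_mul_sqrt_mul (hρ x) _

lemma integral_norm_le_of_integrable_weight (hρ : ∀ x, 0 < ρ x) (hρm : Measurable ρ)
    (hρi : Integrable (fun x => (ρ x)⁻¹) μ) (hψm : AEStronglyMeasurable ψ μ)
    (hψi : Integrable (fun x => ρ x * ‖ψ x‖ ^ 2) μ) :
    ∫ x, ‖ψ x‖ ∂μ ≤
      (∫ x, (ρ x)⁻¹ ∂μ) ^ ((1 : ℝ) / 2) * (∫ x, ρ x * ‖ψ x‖ ^ 2 ∂μ) ^ ((1 : ℝ) / 2) := by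
  have h2 : ENNReal.ofReal 2 = 2 := by norm_num
  have h := integral_mul_le_Lp_mul_Lq_of_nonneg Real.HolderConjugate.two_two
    (Eventually.of_forall fun x => inv_nonneg.2 (Real.sqrt_nonneg (ρ x)))
    (Eventually.of_forall fun x => mul_nonneg (Real.sqrt_nonneg (ρ x)) (norm_nonneg (ψ x)))
    (h2 ▸ memLp_two_inv_sqrt hρ hρm hρi) (h2 ▸ memLp_two_sqrt_mul_norm hρ hρm hψm hψi)
  simpa only [inv_sqrt_mul_sqrt_mul (hρ _), Real.rpow_two, inv_pow, mul_pow,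
    Real.sq_sqrt (hρ _).le] using h

end WeightedCauchySchwarz

lemma integrable_one_add_sq_rpow_neg {t : ℝ} (ht : 1 / 2 < t) :
    Integrable fun x : ℝ => (1 + x ^ 2) ^ (-t) := by
  have h := integrable_rpow_neg_one_add_norm_sq (E := ℝ) (μ := volume) (r := 2 * t)
    (by simp; linarith)
  refine h.congr (Eventually.of_forall fun x => ?_)
  simp only [Real.norm_eq_abs, sq_abs]
  ring_nf

lemma measurable_one_add_sq_rpow (t : ℝ) : Measurable fun x : ℝ => (1 + x ^ 2) ^ t :=
  (measurable_const.add (measurable_id.pow_const 2)).pow_const t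

lemma one_add_sq_rpow_neg (x t : ℝ) : (1 + x ^ 2) ^ (-t) = ((1 + x ^ 2) ^ t)⁻¹ :=
  Real.rpow_neg (by positivity) t

namespace MemL2s

variable {s : ℝ} {ψ : ℝ → ℂ}

lemma integrable_norm (hs : 1 / 2 < s) (hψ : MemL2s s ψ) : Integrable fun x => ‖ψ x‖ := by
  refine integrable_norm_of_integrable_weight (fun x => by positivity)
    (measurable_one_add_sq_rpow s) ?_ hψ.1.aestronglyMeasurable hψ.2
  simpa only [one_add_sq_rpow_neg] using integrable_one_add_sq_rpow_neg hs

lemma integral_norm_le (hs : 1 / 2 < s) (hψ : MemL2s s ψ) :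
    ∫ x, ‖ψ x‖ ≤ (∫ y : ℝ, (1 + y ^ 2) ^ (-s)) ^ ((1 : ℝ) / 2) * wnorm s ψ := by
  have h := integral_norm_le_of_integrable_weight (fun x => by positivity)
    (measurable_one_add_sq_rpow s) ?_ hψ.1.aestronglyMeasurable hψ.2
  · simpa only [wnorm, one_add_sq_rpow_neg] using h
  · simpa only [one_add_sq_rpow_neg] using integrable_one_add_sq_rpow_neg hs

end MemL2s

lemma Complex.im_cpow_one_half_nonneg {z : ℂ} (hz : 0 ≤ z.im) : 0 ≤ (z ^ (1 / 2 : ℂ)).im := by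
  rw [one_div, Complex.cpow_inv_two_im_eq_sqrt hz]
  exact Real.sqrt_nonneg _

lemma Complex.norm_cpow_one_half (z : ℂ) : ‖z ^ (1 / 2 : ℂ)‖ = ‖z‖ ^ (1 / 2 : ℝ) := by
  simpa using Complex.norm_cpow_real z (1 / 2)

lemma Complex.norm_exp_I_mul_mul_ofReal_le_one {w : ℂ} (hw : 0 ≤ w.im) {t : ℝ} (ht : 0 ≤ t) :
    ‖Complex.exp (Complex.I * w * t)‖ ≤ 1 := by
  rw [Complex.norm_exp, Real.exp_le_one_iff]
  simpa [Complex.mul_re] using mul_nonneg hw ht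

lemma norm_R0_le {z : ℂ} (hz : 0 ≤ z.im) {ψ : ℝ → ℂ} (hψ : Integrable fun y => ‖ψ y‖) (x : ℝ) :
    ‖R0 z ψ x‖ ≤ (2 * ‖z‖ ^ (1 / 2 : ℝ))⁻¹ * ∫ y, ‖ψ y‖ := by
  have hcoef : ‖-(1 / (2 * Complex.I * z ^ (1 / 2 : ℂ)))‖ = (2 * ‖z‖ ^ (1 / 2 : ℝ))⁻¹ := by
    rw [norm_neg, norm_div, norm_one, norm_mul, norm_mul, Complex.norm_I, Complex.norm_two,
      mul_one, Complex.norm_cpow_one_half, one_div]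
  rw [R0, norm_mul, hcoef]
  gcongr
  refine norm_integral_le_of_norm_le hψ (Eventually.of_forall fun y => ?_)
  rw [norm_mul]
  exact mul_le_of_le_one_left (norm_nonneg _)
    (Complex.norm_exp_I_mul_mul_ofReal_le_one (Complex.im_cpow_one_half_nonneg hz) (abs_nonneg _))

lemma wnorm_le_of_norm_le {t C : ℝ} (ht : Integrable fun x : ℝ => (1 + x ^ 2) ^ t)
    (hC : 0 ≤ C) {φ : ℝ → ℂ} (hφ : ∀ x, ‖φ x‖ ≤ C) :
    wnorm t φ ≤ C * (∫ x : ℝ, (1 + x ^ 2) ^ t) ^ (1 / 2 : ℝ) := by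
  have hint : ∫ x, (1 + x ^ 2) ^ t * ‖φ x‖ ^ 2 ≤ C ^ 2 * ∫ x : ℝ, (1 + x ^ 2) ^ t := by
    rw [← integral_const_mul]
    refine integral_mono_of_nonneg (Eventually.of_forall fun x => by positivity)
      (ht.const_mul _) (Eventually.of_forall fun x => ?_)
    dsimp only
    rw [mul_comm (C ^ 2)]
    gcongr
    exact hφ x
  calc wnorm t φ ≤ (C ^ 2 * ∫ x : ℝ, (1 + x ^ 2) ^ t) ^ (1 / 2 : ℝ) :=
        Real.rpow_le_rpow (integral_nonneg fun x => by positivity) hint (by norm_num)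
    _ = C * (∫ x : ℝ, (1 + x ^ 2) ^ t) ^ (1 / 2 : ℝ) := by
        rw [Real.mul_rpow (by positivity) (integral_nonneg fun x => by positivity),
          ← Real.sqrt_eq_rpow, Real.sqrt_sq hC]

theorem stmt3_general (s s' : ℝ) (hs : s > 1 / 2) (hs' : s' > 1 / 2)
    (z : ℂ) (hzim : 0 ≤ z.im)
    (ψ : ℝ → ℂ) (hψ : MemL2s s ψ) :
    wnorm (-s') (R0 z ψ) ≤
      (2 * ‖z‖ ^ ((1 : ℝ) / 2))⁻¹ *
        (∫ x : ℝ, (1 + x ^ 2) ^ (-s')) ^ ((1 : ℝ) / 2) *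
        (∫ y : ℝ, (1 + y ^ 2) ^ (-s)) ^ ((1 : ℝ) / 2) * wnorm s ψ := by
  calc wnorm (-s') (R0 z ψ)
      ≤ (2 * ‖z‖ ^ (1 / 2 : ℝ))⁻¹ * (∫ y, ‖ψ y‖) * (∫ x : ℝ, (1 + x ^ 2) ^ (-s')) ^ (1 / 2 : ℝ) :=
        wnorm_le_of_norm_le (integrable_one_add_sq_rpow_neg hs') (by positivity)
          (norm_R0_le hzim (hψ.integrable_norm hs))
    _ ≤ (2 * ‖z‖ ^ (1 / 2 : ℝ))⁻¹ *
          ((∫ y : ℝ, (1 + y ^ 2) ^ (-s)) ^ (1 / 2 : ℝ) * wnorm s ψ) *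
          (∫ x : ℝ, (1 + x ^ 2) ^ (-s')) ^ (1 / 2 : ℝ) := by
        gcongr
        exact hψ.integral_norm_le hs
    _ = _ := by ring

/-- For `s, s' > 1/2` and `z ≠ 0` in the closed upper half-plane, the free resolvent
satisfies
`‖R₀(z)ψ‖_{−s'} ≤ (2|z|^{1/2})⁻¹ (∫ (1+x²)^{−s'} dx)^{1/2} (∫ (1+y²)^{−s} dy)^{1/2} ‖ψ‖_s`,
so `R₀(z)` is bounded from `L^{2,s}(ℝ)` to `L^{2,−s'}(ℝ)`. -/
theorem stmt3 (s s' : ℝ) (hs : s > 1 / 2) (hs' : s' > 1 / 2)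
    (z : ℂ) (hz : z ≠ 0) (hzim : 0 ≤ z.im)
    (ψ : ℝ → ℂ) (hψ : MemL2s s ψ) :
    wnorm (-s') (R0 z ψ) ≤
      (2 * ‖z‖ ^ ((1 : ℝ) / 2))⁻¹ *
        (∫ x : ℝ, (1 + x ^ 2) ^ (-s')) ^ ((1 : ℝ) / 2) *
        (∫ y : ℝ, (1 + y ^ 2) ^ (-s)) ^ ((1 : ℝ) / 2) * wnorm s ψ :=
  stmt3_general s s' hs hs' z hzim ψ hψ
end

section
/- Let j be a non-negative integer and let s, s' > j + 1/2. Then ∫_ℝ ∫_ℝ |x−y|^{2j} (1+x²)^{−s'} (1+y²)^{−s} dx dy < ∞; consequently the kernel (x,y) ↦ −(1/(2·j!)) (1+x²)^{−s'/2} |x−y|^j (1+y²)^{−s/2} is square-integrable on ℝ², i.e. the operator G_j is Hilbert–Schmidt from L^{2,s}(ℝ) to L^{2,−s'}(ℝ). -/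
open MeasureTheory Filter

private lemma int_one_add_sq {t : ℝ} (ht : 1 / 2 < t) :
    Integrable (fun x : ℝ => (1 + x ^ 2) ^ (-t)) := by
  have h := integrable_rpow_neg_one_add_norm_sq (E := ℝ) (μ := volume) (r := 2 * t)
    (by simpa using by linarith)
  have heq : (fun x : ℝ => ((1 : ℝ) + ‖x‖ ^ 2) ^ (-(2 * t) / 2))
      = fun x : ℝ => (1 + x ^ 2) ^ (-t) := by
    funext x
    rw [Real.norm_eq_abs, sq_abs]
    congr 1
    ring
  rwa [heq] at h

private lemma kernel_bound (j : ℕ) (x y : ℝ) :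
    |x - y| ^ (2 * j) ≤ 2 ^ j * ((1 + x ^ 2) ^ j * (1 + y ^ 2) ^ j) := by
  have h1 : |x - y| ^ (2 * j) = ((x - y) ^ 2) ^ j := by
    rw [pow_mul, sq_abs]
  have h2 : (x - y) ^ 2 ≤ 2 * ((1 + x ^ 2) * (1 + y ^ 2)) := by nlinarith [sq_nonneg (x + y), sq_nonneg (x * y)]
  calc |x - y| ^ (2 * j) = ((x - y) ^ 2) ^ j := h1
    _ ≤ (2 * ((1 + x ^ 2) * (1 + y ^ 2))) ^ j := by
        exact pow_le_pow_left₀ (sq_nonneg _) h2 j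
    _ = 2 ^ j * ((1 + x ^ 2) ^ j * (1 + y ^ 2) ^ j) := by rw [mul_pow, mul_pow]

private lemma key_integrable (j : ℕ) (s s' : ℝ) (hs : s > (j : ℝ) + 1 / 2)
    (hs' : s' > (j : ℝ) + 1 / 2) :
    Integrable (fun p : ℝ × ℝ =>
      |p.1 - p.2| ^ (2 * j) * (1 + p.1 ^ 2) ^ (-s') * (1 + p.2 ^ 2) ^ (-s)) := by
  have hF : Integrable (fun x : ℝ => (1 + x ^ 2) ^ ((j : ℝ) - s')) := by
    have := int_one_add_sq (t := s' - (j : ℝ)) (by linarith)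
    simpa [neg_sub] using this
  have hG : Integrable (fun y : ℝ => (1 + y ^ 2) ^ ((j : ℝ) - s)) := by
    have := int_one_add_sq (t := s - (j : ℝ)) (by linarith)
    simpa [neg_sub] using this
  have hprod : Integrable (fun p : ℝ × ℝ =>
      (2 : ℝ) ^ j * ((1 + p.1 ^ 2) ^ ((j : ℝ) - s') * (1 + p.2 ^ 2) ^ ((j : ℝ) - s))) :=
    (hF.mul_prod hG).const_mul _
  refine hprod.mono' ?_ (Filter.Eventually.of_forall fun p => ?_)
  · apply Measurable.aestronglyMeasurable
    fun_prop
  · have hx : (0 : ℝ) < 1 + p.1 ^ 2 := by positivity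
    have hy : (0 : ℝ) < 1 + p.2 ^ 2 := by positivity
    have hb := kernel_bound j p.1 p.2
    have hnn : 0 ≤ |p.1 - p.2| ^ (2 * j) * (1 + p.1 ^ 2) ^ (-s') * (1 + p.2 ^ 2) ^ (-s) := by
      positivity
    rw [Real.norm_eq_abs, abs_of_nonneg hnn]
    have hxj : ((1 + p.1 ^ 2) ^ j : ℝ) * (1 + p.1 ^ 2) ^ (-s') = (1 + p.1 ^ 2) ^ ((j : ℝ) - s') := by
      rw [← Real.rpow_natCast _ j, ← Real.rpow_add hx, sub_eq_add_neg]
    have hyj : ((1 + p.2 ^ 2) ^ j : ℝ) * (1 + p.2 ^ 2) ^ (-s) = (1 + p.2 ^ 2) ^ ((j : ℝ) - s) := by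
      rw [← Real.rpow_natCast _ j, ← Real.rpow_add hy, sub_eq_add_neg]
    calc |p.1 - p.2| ^ (2 * j) * (1 + p.1 ^ 2) ^ (-s') * (1 + p.2 ^ 2) ^ (-s)
        ≤ (2 ^ j * ((1 + p.1 ^ 2) ^ j * (1 + p.2 ^ 2) ^ j)) * (1 + p.1 ^ 2) ^ (-s')
            * (1 + p.2 ^ 2) ^ (-s) := by
          have h1 : (0:ℝ) ≤ (1 + p.1 ^ 2) ^ (-s') := by positivity
          have h2 : (0:ℝ) ≤ (1 + p.2 ^ 2) ^ (-s) := by positivity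
          gcongr
      _ = 2 ^ j * (((1 + p.1 ^ 2) ^ j * (1 + p.1 ^ 2) ^ (-s'))
            * ((1 + p.2 ^ 2) ^ j * (1 + p.2 ^ 2) ^ (-s))) := by ring
      _ = 2 ^ j * ((1 + p.1 ^ 2) ^ ((j : ℝ) - s') * (1 + p.2 ^ 2) ^ ((j : ℝ) - s)) := by
          rw [hxj, hyj]

/-- For a non-negative integer `j` and `s, s' > j + 1/2`, the double integral
`∬ |x−y|^{2j} (1+x²)^{−s'} (1+y²)^{−s} dx dy` is finite; consequently the kernel
`(x,y) ↦ −(1/(2·j!)) (1+x²)^{−s'/2} |x−y|^j (1+y²)^{−s/2}` is square-integrable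
on `ℝ²`, i.e. `G_j` is Hilbert–Schmidt from `L^{2,s}(ℝ)` to `L^{2,−s'}(ℝ)`. -/
theorem stmt4 (j : ℕ) (s s' : ℝ) (hs : s > (j : ℝ) + 1 / 2) (hs' : s' > (j : ℝ) + 1 / 2) :
    (∫⁻ x : ℝ, ∫⁻ y : ℝ,
        ENNReal.ofReal (|x - y| ^ (2 * j) * (1 + x ^ 2) ^ (-s') * (1 + y ^ 2) ^ (-s))) < ⊤ ∧
      Integrable (fun p : ℝ × ℝ =>
        (-(1 / (2 * (Nat.factorial j : ℝ))) * (1 + p.1 ^ 2) ^ (-s' / 2) *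
            |p.1 - p.2| ^ j * (1 + p.2 ^ 2) ^ (-s / 2)) ^ 2) := by
  have hkey := key_integrable j s s' hs hs'
  constructor
  · have hmeas : AEMeasurable (fun p : ℝ × ℝ =>
        ENNReal.ofReal (|p.1 - p.2| ^ (2 * j) * (1 + p.1 ^ 2) ^ (-s') * (1 + p.2 ^ 2) ^ (-s)))
        ((volume : Measure ℝ).prod volume) := by
      apply Measurable.aemeasurable
      apply Measurable.ennreal_ofReal
      fun_prop
    have := MeasureTheory.lintegral_prod _ hmeas
    rw [← this]
    exact hkey.lintegral_lt_top
  · have heq : ∀ p : ℝ × ℝ,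
        (-(1 / (2 * (Nat.factorial j : ℝ))) * (1 + p.1 ^ 2) ^ (-s' / 2) *
            |p.1 - p.2| ^ j * (1 + p.2 ^ 2) ^ (-s / 2)) ^ 2
        = (1 / (2 * (Nat.factorial j : ℝ))) ^ 2 *
            (|p.1 - p.2| ^ (2 * j) * (1 + p.1 ^ 2) ^ (-s') * (1 + p.2 ^ 2) ^ (-s)) := by
      intro p
      have hx : (0 : ℝ) < 1 + p.1 ^ 2 := by positivity
      have hy : (0 : ℝ) < 1 + p.2 ^ 2 := by positivity
      have hx2 : ((1 + p.1 ^ 2) ^ (-s' / 2) : ℝ) ^ 2 = (1 + p.1 ^ 2) ^ (-s') := by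
        rw [← Real.rpow_natCast ((1 + p.1 ^ 2) ^ (-s' / 2)) 2, ← Real.rpow_mul hx.le]
        norm_num
      have hy2 : ((1 + p.2 ^ 2) ^ (-s / 2) : ℝ) ^ 2 = (1 + p.2 ^ 2) ^ (-s) := by
        rw [← Real.rpow_natCast ((1 + p.2 ^ 2) ^ (-s / 2)) 2, ← Real.rpow_mul hy.le]
        norm_num
      have hj2 : (|p.1 - p.2| ^ j : ℝ) ^ 2 = |p.1 - p.2| ^ (2 * j) := by
        rw [← pow_mul, mul_comm]
      calc (-(1 / (2 * (Nat.factorial j : ℝ))) * (1 + p.1 ^ 2) ^ (-s' / 2) *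
            |p.1 - p.2| ^ j * (1 + p.2 ^ 2) ^ (-s / 2)) ^ 2
          = (1 / (2 * (Nat.factorial j : ℝ))) ^ 2 * (((1 + p.1 ^ 2) ^ (-s' / 2)) ^ 2 *
              ((|p.1 - p.2| ^ j) ^ 2 * ((1 + p.2 ^ 2) ^ (-s / 2)) ^ 2)) := by ring
        _ = _ := by rw [hx2, hy2, hj2]; ring
    simp only [heq]
    exact hkey.const_mul _
end

section
/- Let m be a non-negative integer, a₀ > 0, t ∈ ℝ, and set N_m := (Γ(m+1/2) / (2a₀)^{m+1/2})^{−1/2}, so that the function φ_m(k) := N_m k^m exp(−a₀ k²) is L²-normalized. Then ∫_ℝ |φ_m(k)|² exp(−itk²) dk = (1 + it/(2a₀))^{−(m+1/2)}, where the right-hand side is the principal complex power. -/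
/-!
With `b = 2a₀ + it` the integrand is `N² k^{2m} exp(-b k²)`, so everything reduces to the Gaussian
moments `I_n(b) = ∫ x^n exp(-b x²)` for complex `b` with `Re b > 0`. Integrating the derivative of
`x^{n+1} exp(-b x²)` over `ℝ` gives `I_{n+2} = (n+1)/(2b) I_n`, and together with the complex
Gaussian integral `I_0 = (π/b)^{1/2}` this yields `I_{2m} = Γ(m+1/2) b^{-(m+1/2)}`. Finally
`N² = (2a₀)^{m+1/2} / Γ(m+1/2)` and `1 + it/(2a₀) = (2a₀)⁻¹ b`; the principal power splits over a
positive real factor.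
-/

open MeasureTheory Filter Topology Complex

theorem Complex.ofReal_mul_cpow {r : ℝ} (hr : 0 ≤ r) (z s : ℂ) :
    ((r : ℂ) * z) ^ s = (r : ℂ) ^ s * z ^ s := by
  rcases hr.eq_or_lt with rfl | hr
  · rcases eq_or_ne s 0 with rfl | hs <;> simp [zero_cpow, *]
  rcases eq_or_ne z 0 with rfl | hz
  · rcases eq_or_ne s 0 with rfl | hs <;> simp [zero_cpow, *]
  have hr' : (r : ℂ) ≠ 0 := ofReal_ne_zero.mpr hr.ne'
  rw [cpow_def_of_ne_zero (mul_ne_zero hr' hz), cpow_def_of_ne_zero hr', cpow_def_of_ne_zero hz,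
    log_ofReal_mul hr hz, ofReal_log hr.le, add_mul, exp_add]

section GaussianMoments

variable {b : ℂ}

theorem hasDerivAt_pow_succ_mul_cexp_neg_mul_sq (n : ℕ) (x : ℝ) :
    HasDerivAt (fun y : ℝ => (y : ℂ) ^ (n + 1) * cexp (-b * (y : ℂ) ^ 2))
      ((n + 1) * ((x : ℂ) ^ n * cexp (-b * (x : ℂ) ^ 2))
        - 2 * b * ((x : ℂ) ^ (n + 2) * cexp (-b * (x : ℂ) ^ 2))) x := by
  have h : HasDerivAt (fun z : ℂ => z ^ (n + 1) * cexp (-b * z ^ 2)) _ x :=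
    (hasDerivAt_pow (n + 1) (x : ℂ)).mul ((hasDerivAt_pow 2 (x : ℂ)).const_mul (-b)).cexp
  convert h.comp_ofReal using 1
  push_cast
  ring

variable (hb : 0 < b.re)
include hb

theorem integrable_pow_mul_cexp_neg_mul_sq (n : ℕ) :
    Integrable fun x : ℝ => (x : ℂ) ^ n * cexp (-b * (x : ℂ) ^ 2) := by
  have h := integrable_rpow_mul_exp_neg_mul_sq hb (s := n)
    (neg_one_lt_zero.trans_le n.cast_nonneg)
  simp only [Real.rpow_natCast] at h
  refine h.norm.mono' (by fun_prop) (ae_of_all _ fun x => ?_)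
  rw [norm_mul, norm_pow, norm_real, norm_cexp_neg_mul_sq, norm_mul, norm_pow, Real.norm_eq_abs,
    Real.norm_of_nonneg (Real.exp_pos _).le]

theorem tendsto_pow_mul_cexp_neg_mul_sq_cocompact (n : ℕ) :
    Tendsto (fun x : ℝ => (x : ℂ) ^ n * cexp (-b * (x : ℂ) ^ 2)) (cocompact ℝ) (𝓝 0) := by
  rw [tendsto_zero_iff_norm_tendsto_zero]
  simp only [norm_mul, norm_pow, norm_real, Real.norm_eq_abs, norm_cexp_neg_mul_sq]
  simpa only [Real.rpow_natCast] using tendsto_rpow_abs_mul_exp_neg_mul_sq_cocompact hb n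

theorem integral_pow_add_two_mul_cexp_neg_mul_sq (n : ℕ) :
    ∫ x : ℝ, (x : ℂ) ^ (n + 2) * cexp (-b * (x : ℂ) ^ 2)
      = (n + 1) / (2 * b) * ∫ x : ℝ, (x : ℂ) ^ n * cexp (-b * (x : ℂ) ^ 2) := by
  have hb0 : b ≠ 0 := ne_zero_of_re_pos hb
  have hI := integrable_pow_mul_cexp_neg_mul_sq hb
  have hlim := tendsto_pow_mul_cexp_neg_mul_sq_cocompact hb (n + 1)
  have hparts := integral_of_hasDerivAt_of_tendsto (hasDerivAt_pow_succ_mul_cexp_neg_mul_sq n)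
    (((hI n).const_mul _).sub ((hI (n + 2)).const_mul _))
    (hlim.mono_left atBot_le_cocompact) (hlim.mono_left atTop_le_cocompact)
  rw [integral_sub ((hI n).const_mul _) ((hI (n + 2)).const_mul _), integral_const_mul,
    integral_const_mul, sub_self, sub_eq_zero] at hparts
  rw [div_mul_eq_mul_div, eq_div_iff (mul_ne_zero two_ne_zero hb0)]
  linear_combination -hparts

theorem integral_cexp_neg_mul_sq_eq_Gamma :
    ∫ x : ℝ, cexp (-b * (x : ℂ) ^ 2) = Complex.Gamma (1 / 2) * b ^ (-(1 / 2 : ℂ)) := by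
  have harg : b.arg ≠ Real.pi := fun h => by linarith [(arg_eq_pi_iff.mp h).1]
  rw [integral_gaussian_complex hb, div_eq_mul_inv, ofReal_mul_cpow Real.pi_pos.le,
    inv_cpow _ _ harg, ← cpow_neg, Complex.Gamma_one_half_eq]

theorem integral_pow_two_mul_mul_cexp_neg_mul_sq (m : ℕ) :
    ∫ x : ℝ, (x : ℂ) ^ (2 * m) * cexp (-b * (x : ℂ) ^ 2)
      = Complex.Gamma (m + 1 / 2) * b ^ (-(m + 1 / 2 : ℂ)) := by
  have hb0 : b ≠ 0 := ne_zero_of_re_pos hb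
  induction m with
  | zero => simpa using integral_cexp_neg_mul_sq_eq_Gamma hb
  | succ m ih =>
    have hs : (m + 1 / 2 : ℂ) ≠ 0 := ne_zero_of_re_pos (by simp [add_pos_of_nonneg_of_pos])
    have hpow : b ^ (-(m + 1 / 2 + 1 : ℂ)) = b ^ (-(m + 1 / 2 : ℂ)) * b⁻¹ := by
      rw [neg_add, cpow_add _ _ hb0, cpow_neg_one]
    rw [mul_add_one, integral_pow_add_two_mul_cexp_neg_mul_sq hb, ih, Nat.cast_succ,
      show (m + 1 + 1 / 2 : ℂ) = m + 1 / 2 + 1 by ring, Gamma_add_one _ hs, hpow]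
    push_cast
    field_simp

end GaussianMoments

theorem Real.rpow_neg_one_half_sq {x : ℝ} (hx : 0 ≤ x) : (x ^ (-(1 : ℝ) / 2)) ^ 2 = x⁻¹ := by
  rw [← Real.rpow_natCast, ← Real.rpow_mul hx]
  norm_num [Real.rpow_neg_one]

/-- Survival amplitude of the Gaussian-type state `φ_m(k) = N_m k^m exp(−a₀k²)`,
with `N_m = (Γ(m+1/2)/(2a₀)^{m+1/2})^{−1/2}`:
`∫ |φ_m(k)|² e^{−itk²} dk = (1 + it/(2a₀))^{−(m+1/2)}` (principal complex power). -/
theorem stmt14 (m : ℕ) (a₀ t : ℝ) (ha : a₀ > 0) (N : ℝ)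
    (hN : N = (Real.Gamma ((m : ℝ) + 1 / 2) / (2 * a₀) ^ ((m : ℝ) + 1 / 2)) ^ (-(1 : ℝ) / 2)) :
    ∫ k : ℝ, (((N * k ^ m * Real.exp (-a₀ * k ^ 2)) ^ 2 : ℝ) : ℂ) *
        Complex.exp (-(Complex.I * (t : ℂ) * (k : ℂ) ^ 2)) =
      (1 + Complex.I * (t : ℂ) / (2 * (a₀ : ℂ))) ^ (-((m : ℂ) + 1 / 2)) := by
  set s : ℝ := m + 1 / 2
  set b : ℂ := 2 * a₀ + I * t
  have h2a : (0 : ℝ) < 2 * a₀ := by linarith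
  have hb : 0 < b.re := by simpa [b] using h2a
  have hΓ : (Real.Gamma s : ℂ) ≠ 0 :=
    ofReal_ne_zero.mpr (Real.Gamma_pos_of_pos (by positivity)).ne'
  have hN2 : N ^ 2 = (2 * a₀) ^ s / Real.Gamma s := by
    rw [hN, Real.rpow_neg_one_half_sq (by positivity), inv_div]
  have hsc : (m + 1 / 2 : ℂ) = (s : ℂ) := by push_cast [s]; ring
  have hb_scale : 1 + I * t / (2 * a₀) = (((2 * a₀)⁻¹ : ℝ) : ℂ) * b := by
    have : (a₀ : ℂ) ≠ 0 := ofReal_ne_zero.mpr ha.ne'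
    push_cast [b]
    field_simp
  calc _ = ((N ^ 2 : ℝ) : ℂ) * ∫ k : ℝ, (k : ℂ) ^ (2 * m) * cexp (-b * (k : ℂ) ^ 2) := by
        rw [← integral_const_mul]
        congr 1 with k
        push_cast [ofReal_exp, b]
        rw [mul_pow, mul_pow, ← Complex.exp_nat_mul, ← pow_mul, mul_assoc _ (cexp _),
          ← Complex.exp_add]
        ring_nf
    _ = ((2 * a₀ : ℝ) : ℂ) ^ (s : ℂ) * b ^ (-(s : ℂ)) := by
        rw [integral_pow_two_mul_mul_cexp_neg_mul_sq hb, hN2, hsc, Complex.Gamma_ofReal,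
          ← ofReal_cpow h2a.le, ofReal_div, div_mul_eq_mul_div, mul_left_comm,
          mul_div_cancel_left₀ _ hΓ]
    _ = _ := by
        rw [hb_scale, ofReal_mul_cpow (inv_pos.mpr h2a).le, hsc, ← ofReal_neg,
          ← ofReal_cpow (inv_pos.mpr h2a).le, ← ofReal_cpow h2a.le, Real.inv_rpow h2a.le,
          ← Real.rpow_neg h2a.le, neg_neg, ofReal_neg]
end
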